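/- arXiv:1310.3363 — 3 statements merged into one kernel-verified Lean document; each statement's English description precedes it below -/
import Mathlib

section
/- Let E and F be Borel spaces, A an analytic subset of E × F, and f : A → ℝ an upper semianalytic function. Define g(x) := sup{ f(x, y) : (x, y) ∈ A }. Then: (i) g : π_E(A) → ℝ ∪ {∞} is upper semianalytic; (ii) for every ε > 0 there exists an analytically measurable function φ_ε : π_E(A) → F such that (x, φ_ε(x)) ∈ A and f(x, φ_ε(x)) ≥ g^ε(x) := (g(x) − ε) 1_{g(x)<∞} + (1/ε) 1_{g(x)=∞} for every x ∈ π_E(A). -/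
open MeasureTheory

/-- A subset `B` of a measurable space `E` is analytic if it is the projection onto `E` of
a Borel (measurable) subset of `E × G` for some Borel space `G` (modelled as a standard
Borel space). -/
def IsAnalyticSet {E : Type*} [mE : MeasurableSpace E] (B : Set E) : Prop :=
  ∃ (G : Type) (mG : MeasurableSpace G), @StandardBorelSpace G mG ∧
    ∃ C : Set (E × G), MeasurableSet[mE.prod mG] C ∧ B = Prod.fst '' C

/-- The σ-field `A(E)` generated by all analytic subsets of `E`. -/
def analyticSigma (E : Type*) [MeasurableSpace E] : MeasurableSpace E :=
  MeasurableSpace.generateFrom {s : Set E | IsAnalyticSet s}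

/-!
The superlevel sets of `g` are projections, `{c < g} = π_E {(x, y) ∈ A | c < f (x, y)}`, hence
analytic. For the selection, write an analytic set as the continuous image `range h` of the Baire
space; following the leftmost branch of `Prod.fst ∘ h` over `x` gives a selector whose digits are
determined by membership in the analytic images of cylinders (Jankov–von Neumann). Applying this
to the sets `{f > q}`, `q ∈ ℚ`, and using on `{x | g^ε x ≤ q < g x}` the selector for the first
such `q` yields `φ_ε`.
-/

open Set MeasurableSpace

section LeftmostBranch

variable {α : Type*} (h : (ℕ → ℕ) → α)

def cylinderImage (s : List ℕ) : Set α :=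
  h '' {z | ∀ i (hi : i < s.length), z i = s[i]}

variable {h}

lemma cylinderImage_nil : cylinderImage h [] = range h := by
  simp [cylinderImage]

lemma exists_mem_cylinderImage_imp (x : α) (s : List ℕ) :
    ∃ n, x ∈ cylinderImage h s → x ∈ cylinderImage h (s ++ [n]) := by
  by_cases hx : x ∈ cylinderImage h s
  · obtain ⟨z, hz, rfl⟩ := hx
    refine ⟨z s.length, fun _ => ⟨z, fun i hi => ?_, rfl⟩⟩
    rcases Nat.lt_succ_iff_lt_or_eq.1 (by simpa using hi) with hi | rfl
    · rw [List.getElem_append_left hi]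
      exact hz i hi
    · simp
  · exact ⟨0, (absurd · hx)⟩

variable (h)

open Classical in
/-- The least digit extending the prefix `s` of a branch over `x` (and `0` if there is none). -/
noncomputable def nextDigit (x : α) (s : List ℕ) : ℕ :=
  Nat.find (exists_mem_cylinderImage_imp (h := h) x s)

noncomputable def branchPrefix (x : α) : ℕ → List ℕ
  | 0 => []
  | k + 1 => branchPrefix x k ++ [nextDigit h x (branchPrefix x k)]

noncomputable def leftmostBranch (x : α) (k : ℕ) : ℕ :=
  nextDigit h x (branchPrefix h x k)

variable {h}

@[simp]
lemma length_branchPrefix (x : α) (k : ℕ) : (branchPrefix h x k).length = k := by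
  induction k with
  | zero => rfl
  | succ k ih => simp [branchPrefix, ih]

lemma getElem_branchPrefix (x : α) {i k : ℕ} (hi : i < k) :
    (branchPrefix h x k)[i]'(by simpa using hi) = leftmostBranch h x i := by
  induction k with
  | zero => omega
  | succ k ih =>
    simp only [branchPrefix]
    rcases Nat.lt_succ_iff_lt_or_eq.1 hi with hi | rfl
    · rw [List.getElem_append_left (by simpa using hi)]
      exact ih hi
    · simp [leftmostBranch]

lemma mem_cylinderImage_nextDigit {x : α} {s : List ℕ} (hx : x ∈ cylinderImage h s) :
    x ∈ cylinderImage h (s ++ [nextDigit h x s]) := by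
  classical
  exact Nat.find_spec (exists_mem_cylinderImage_imp x s) hx

lemma mem_cylinderImage_branchPrefix {x : α} (hx : x ∈ range h) (k : ℕ) :
    x ∈ cylinderImage h (branchPrefix h x k) := by
  induction k with
  | zero => rwa [branchPrefix, cylinderImage_nil]
  | succ k ih => exact mem_cylinderImage_nextDigit ih

/-- Every `x ∈ range h` is the limit of points `h z_k` where `z_k` agrees with the leftmost
branch up to `k`; continuity of `h` and uniqueness of limits give `h (leftmostBranch h x) = x`. -/
lemma apply_leftmostBranch [TopologicalSpace α] [T2Space α] (hh : Continuous h) {x : α}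
    (hx : x ∈ range h) : h (leftmostBranch h x) = x := by
  have hz : ∀ k, ∃ z, (∀ i < k, z i = leftmostBranch h x i) ∧ h z = x := fun k => by
    obtain ⟨z, hz, hzx⟩ := mem_cylinderImage_branchPrefix hx k
    refine ⟨z, fun i hi => ?_, hzx⟩
    rw [hz i (by simpa using hi), getElem_branchPrefix x hi]
  choose z hz_eq hz_apply using hz
  have hlim : Filter.Tendsto z Filter.atTop (nhds (leftmostBranch h x)) := by
    refine tendsto_pi_nhds.2 fun i => tendsto_const_nhds.congr' ?_
    filter_upwards [Filter.eventually_gt_atTop i] with k hk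
    exact (hz_eq k i hk).symm
  exact tendsto_nhds_unique ((hh.tendsto _).comp hlim) (by simp [Function.comp_def, hz_apply])

section Measurability

variable {m : MeasurableSpace α}

lemma measurable_nextDigit (hcyl : ∀ s, MeasurableSet (cylinderImage h s)) (s : List ℕ) :
    Measurable fun x => nextDigit h x s := by
  classical
  refine measurable_find _ fun n => ?_
  simp only [imp_iff_not_or, ofPred_or]
  exact (hcyl s).compl.union (hcyl _)

lemma measurableSet_branchPrefix_eq (hcyl : ∀ s, MeasurableSet (cylinderImage h s)) (k : ℕ)
    (s : List ℕ) : MeasurableSet {x | branchPrefix h x k = s} := by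
  induction k generalizing s with
  | zero => exact .const ([] = s)
  | succ k ih =>
    have : {x | branchPrefix h x (k + 1) = s} = ⋃ t,
        {x | branchPrefix h x k = t} ∩ (fun x => nextDigit h x t) ⁻¹' {n | t ++ [n] = s} := by
      ext x
      simp [branchPrefix]
    rw [this]
    exact .iUnion fun t => (ih t).inter (measurable_nextDigit hcyl t trivial)

lemma measurable_leftmostBranch (hcyl : ∀ s, MeasurableSet (cylinderImage h s)) :
    Measurable (leftmostBranch h) := by
  refine measurable_pi_iff.2 fun k => measurable_to_countable' fun n => ?_
  have : (fun x => leftmostBranch h x k) ⁻¹' {n} =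
      ⋃ s, {x | branchPrefix h x k = s} ∩ (fun x => nextDigit h x s) ⁻¹' {n} := by
    ext x
    simp [leftmostBranch]
  rw [this]
  exact .iUnion fun s =>
    (measurableSet_branchPrefix_eq hcyl k s).inter (measurable_nextDigit hcyl s trivial)

end Measurability

end LeftmostBranch

section Analytic

lemma isAnalyticSet_iff_analyticSet {α : Type*} [TopologicalSpace α] [PolishSpace α]
    [MeasurableSpace α] [BorelSpace α] {s : Set α} : IsAnalyticSet s ↔ AnalyticSet s := by
  refine ⟨fun ⟨_, _, _, C, hC, hs⟩ => hs ▸ hC.analyticSet_image measurable_fst, fun hs => ?_⟩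
  obtain ⟨β, tβ, hβ, f, hf, rfl⟩ := analyticSet_iff_exists_polishSpace_range.1 hs
  let : MeasurableSpace β := borel β
  have : BorelSpace β := ⟨rfl⟩
  refine ⟨β, borel β, inferInstance, {p | p.1 = f p.2}, ?_, ?_⟩
  · exact (isClosed_eq continuous_fst (hf.comp continuous_snd)).measurableSet
  · ext x
    simp [eq_comm]

lemma IsAnalyticSet.measurableSet_analyticSigma {E : Type*} [MeasurableSpace E] {s : Set E}
    (hs : IsAnalyticSet s) : MeasurableSet[analyticSigma E] s :=
  measurableSet_generateFrom hs

lemma analyticSet_cylinderImage {α : Type*} [TopologicalSpace α] {h : (ℕ → ℕ) → α}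
    (hh : Continuous h) (s : List ℕ) : AnalyticSet (cylinderImage h s) := by
  refine IsClosed.analyticSet ?_ |>.image_of_continuous hh
  simp only [ofPred_forall]
  exact isClosed_iInter fun i => isClosed_iInter fun _ => isClosed_eq (continuous_apply i)
    continuous_const

variable {E F : Type*} [MeasurableSpace E] [StandardBorelSpace E]
  [MeasurableSpace F] [StandardBorelSpace F]

lemma IsAnalyticSet.image_fst {B : Set (E × F)} (hB : IsAnalyticSet B) :
    IsAnalyticSet (Prod.fst '' B) := by
  let := upgradeStandardBorel E
  let := upgradeStandardBorel F
  rw [isAnalyticSet_iff_analyticSet] at hB ⊢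
  exact hB.image_of_continuous continuous_fst

/-- **Jankov–von Neumann uniformization**: an analytic set admits an analytically measurable
selector. Writing `B = range h` with `h` continuous on the Baire space, follow the leftmost branch
of `Prod.fst ∘ h` over `x`; its digits are read off analytic cylinder images. -/
theorem exists_measurable_analyticSigma_selection [Nonempty F] {B : Set (E × F)}
    (hB : IsAnalyticSet B) :
    ∃ ψ : E → F, Measurable[analyticSigma E] ψ ∧ ∀ x ∈ Prod.fst '' B, (x, ψ x) ∈ B := by
  let := upgradeStandardBorel E
  let := upgradeStandardBorel F
  rw [isAnalyticSet_iff_analyticSet, AnalyticSet] at hB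
  rcases hB with rfl | ⟨h, hh, rfl⟩
  · exact ⟨fun _ => Classical.arbitrary F, measurable_const, by simp⟩
  have hcyl (s : List ℕ) : MeasurableSet[analyticSigma E] (cylinderImage (Prod.fst ∘ h) s) :=
    (isAnalyticSet_iff_analyticSet.2 <| analyticSet_cylinderImage (continuous_fst.comp hh) s)
      |>.measurableSet_analyticSigma
  refine ⟨fun x => (h (leftmostBranch (Prod.fst ∘ h) x)).2,
    (continuous_snd.comp hh).measurable.comp (measurable_leftmostBranch hcyl), ?_⟩
  rintro x ⟨_, ⟨z, rfl⟩, rfl⟩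
  exact ⟨_, Prod.ext (apply_leftmostBranch (continuous_fst.comp hh) (mem_range_self z)) rfl⟩

end Analytic

lemma measurable_of_measurableSet_coe_lt {α : Type*} {m : MeasurableSpace α} {g : α → EReal}
    (hg : ∀ c : ℝ, MeasurableSet {x | (c : EReal) < g x}) : Measurable g := by
  refine measurable_of_Ioi fun a => ?_
  induction a with
  | bot =>
    have : g ⁻¹' Ioi ⊥ = ⋃ q : ℚ, {x | ((q : ℝ) : EReal) < g x} := by
      ext x
      simp only [mem_preimage, mem_Ioi, mem_iUnion, mem_ofPred_eq]
      exact ⟨fun hx => (EReal.lt_iff_exists_rat_btwn.1 hx).imp fun _ => And.right,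
        fun ⟨_, hq⟩ => (EReal.bot_lt_coe _).trans hq⟩
    exact this ▸ .iUnion fun q => hg q
  | coe c => exact hg c
  | top => simp

section Supremum

variable {E F : Type*} {A : Set (E × F)} {f : E × F → ℝ} {g : E → EReal}

lemma coe_lt_iff_exists_of_eq_iSup (hg : ∀ x, g x = ⨆ (y : F) (_ : (x, y) ∈ A), (f (x, y) : EReal))
    (c : ℝ) (x : E) : (c : EReal) < g x ↔ ∃ y, (x, y) ∈ A ∧ c < f (x, y) := by
  simp [hg, lt_iSup_iff]

lemma setOf_mem_image_fst_and_coe_lt_eq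
    (hg : ∀ x, g x = ⨆ (y : F) (_ : (x, y) ∈ A), (f (x, y) : EReal)) (c : ℝ) :
    {x | x ∈ Prod.fst '' A ∧ (c : EReal) < g x} = Prod.fst '' {p | p ∈ A ∧ c < f p} := by
  ext x
  simp only [mem_ofPred_eq, coe_lt_iff_exists_of_eq_iSup hg, mem_image, Prod.exists]
  grind

lemma bot_lt_of_mem_image_fst (hg : ∀ x, g x = ⨆ (y : F) (_ : (x, y) ∈ A), (f (x, y) : EReal))
    {x : E} (hx : x ∈ Prod.fst '' A) : ⊥ < g x := by
  obtain ⟨⟨x, y⟩, hxy, rfl⟩ := hx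
  exact (coe_lt_iff_exists_of_eq_iSup hg (f (x, y) - 1) x).2 ⟨y, hxy, by linarith⟩
    |>.trans' (EReal.bot_lt_coe _)

lemma isAnalyticSet_setOf_mem_image_fst_and_coe_lt [MeasurableSpace E] [StandardBorelSpace E]
    [MeasurableSpace F] [StandardBorelSpace F]
    (hf : ∀ c : ℝ, IsAnalyticSet {p : E × F | p ∈ A ∧ c < f p})
    (hg : ∀ x, g x = ⨆ (y : F) (_ : (x, y) ∈ A), (f (x, y) : EReal)) (c : ℝ) :
    IsAnalyticSet {x | x ∈ Prod.fst '' A ∧ (c : EReal) < g x} :=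
  setOf_mem_image_fst_and_coe_lt_eq hg c ▸ (hf c).image_fst

/-- On the analytically measurable set `{x | v (g x) ≤ q < g x}` use a selector of `{f > q}`;
since `v (g x) < g x`, some rational `q` works for every `x`. -/
theorem exists_measurable_selection_le_apply [MeasurableSpace E] [StandardBorelSpace E]
    [MeasurableSpace F] [StandardBorelSpace F]
    (hf : ∀ c : ℝ, IsAnalyticSet {p : E × F | p ∈ A ∧ c < f p})
    (hg : ∀ x, g x = ⨆ (y : F) (_ : (x, y) ∈ A), (f (x, y) : EReal))
    {v : EReal → EReal} (hv : Measurable v) (hv_lt : ∀ t, ⊥ < t → v t < t) :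
    ∃ φ : Prod.fst '' A → F, Measurable[(analyticSigma E).comap Subtype.val] φ ∧
      ∀ x : Prod.fst '' A, ((x : E), φ x) ∈ A ∧ v (g x) ≤ f ((x : E), φ x) := by
  classical
  rcases isEmpty_or_nonempty (Prod.fst '' A) with _ | ⟨⟨_, ⟨_, y⟩, -, rfl⟩⟩
  · exact ⟨isEmptyElim, fun _ _ => Subsingleton.measurableSet, isEmptyElim⟩
  have : Nonempty F := ⟨y⟩
  obtain ⟨q, hq⟩ := exists_surjective_nat ℚ
  choose ψ hψ hψB using fun n => exists_measurable_analyticSigma_selection (hf (q n))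
  have hval : Measurable[(analyticSigma E).comap Subtype.val, analyticSigma E]
      (Subtype.val : Prod.fst '' A → E) := comap_measurable _
  have hgm : Measurable[(analyticSigma E).comap Subtype.val] fun x : Prod.fst '' A => g x :=
    measurable_of_measurableSet_coe_lt fun c =>
      ⟨_, (isAnalyticSet_setOf_mem_image_fst_and_coe_lt hf hg c).measurableSet_analyticSigma,
        by ext x; exact and_iff_right x.2⟩
  let p (n : ℕ) (x : Prod.fst '' A) : Prop := v (g x) ≤ (q n : ℝ) ∧ ((q n : ℝ) : EReal) < g x
  have hp (x : Prod.fst '' A) : ∃ n, p n x := by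
    obtain ⟨r, hr⟩ := EReal.lt_iff_exists_rat_btwn.1 (hv_lt _ (bot_lt_of_mem_image_fst hg x.2))
    obtain ⟨n, rfl⟩ := hq r
    exact ⟨n, hr.1.le, hr.2⟩
  refine ⟨fun x => ψ (Nat.find (hp x)) x, Measurable.find (p := p) (fun n => (hψ n).comp hval)
    (fun n => measurableSet_le (hv.comp hgm) measurable_const |>.inter
      (measurableSet_lt measurable_const hgm)) hp, fun x => ?_⟩
  obtain ⟨hvq, hqg⟩ := Nat.find_spec (hp x)
  obtain ⟨hA, hqf⟩ := hψB _ x <| by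
    rw [← setOf_mem_image_fst_and_coe_lt_eq hg]
    exact ⟨x.2, hqg⟩
  exact ⟨hA, hvq.trans (EReal.coe_le_coe_iff.2 hqf.le)⟩

end Supremum

theorem usa_sup_and_selection_general
    {E F : Type*} [MeasurableSpace E] [StandardBorelSpace E]
    [MeasurableSpace F] [StandardBorelSpace F]
    (A : Set (E × F))
    (f : E × F → ℝ)
    (hf : ∀ c : ℝ, IsAnalyticSet {p : E × F | p ∈ A ∧ c < f p})
    (g : E → EReal)
    (hg : ∀ x, g x = ⨆ (y : F) (_ : (x, y) ∈ A), (f (x, y) : EReal)) :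
    (∀ c : ℝ, IsAnalyticSet {x : E | x ∈ Prod.fst '' A ∧ (c : EReal) < g x}) ∧
    (∀ ε : ℝ, 0 < ε → ∃ φ : (Prod.fst '' A) → F,
      @Measurable _ _ ((analyticSigma E).comap Subtype.val) _ φ ∧
      ∀ x : (Prod.fst '' A), ((x : E), φ x) ∈ A ∧
        (if g (x : E) = ⊤ then ((1 / ε : ℝ) : EReal) else g (x : E) - (ε : EReal))
          ≤ (f ((x : E), φ x) : EReal)) := by
  refine ⟨isAnalyticSet_setOf_mem_image_fst_and_coe_lt hf hg, fun ε hε => ?_⟩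
  have hsub : Monotone fun t : EReal => t - ε := fun _ _ h => EReal.sub_le_sub h le_rfl
  refine exists_measurable_selection_le_apply hf hg
    (v := fun t => if t = ⊤ then ((1 / ε : ℝ) : EReal) else t - ε)
    (Measurable.ite (measurableSet_singleton ⊤) measurable_const hsub.measurable) fun t ht => ?_
  induction t with
  | bot => exact absurd ht (lt_irrefl _)
  | coe r => simpa using EReal.coe_lt_coe_iff.2 (sub_lt_self r hε)
  | top => simp

/-- **Upper semianalytic supremum and ε-optimal analytic selection.** Let `A ⊆ E × F` be
analytic and `f : A → ℝ` upper semianalytic (its strict superlevel sets within `A` are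
analytic).  Set `g(x) := sup { f(x,y) : (x,y) ∈ A }`.  Then:
(i) `g` is upper semianalytic on `π_E(A)`;
(ii) for every `ε > 0` there is an analytically measurable `φ_ε : π_E(A) → F` with
`(x, φ_ε(x)) ∈ A` and `f(x, φ_ε(x)) ≥ g^ε(x) = (g(x) − ε) 1_{g<∞} + (1/ε) 1_{g=∞}`. -/
theorem usa_sup_and_selection
    {E F : Type*} [MeasurableSpace E] [StandardBorelSpace E]
    [MeasurableSpace F] [StandardBorelSpace F]
    (A : Set (E × F)) (hA : IsAnalyticSet A)
    (f : E × F → ℝ)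
    (hf : ∀ c : ℝ, IsAnalyticSet {p : E × F | p ∈ A ∧ c < f p})
    (g : E → EReal)
    (hg : ∀ x, g x = ⨆ (y : F) (_ : (x, y) ∈ A), (f (x, y) : EReal)) :
    (∀ c : ℝ, IsAnalyticSet {x : E | x ∈ Prod.fst '' A ∧ (c : EReal) < g x}) ∧
    (∀ ε : ℝ, 0 < ε → ∃ φ : (Prod.fst '' A) → F,
      @Measurable _ _ ((analyticSigma E).comap Subtype.val) _ φ ∧
      ∀ x : (Prod.fst '' A), ((x : E), φ x) ∈ A ∧
        (if g (x : E) = ⊤ then ((1 / ε : ℝ) : EReal) else g (x : E) - (ε : EReal))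
          ≤ (f ((x : E), φ x) : EReal)) :=
  usa_sup_and_selection_general A f hf g hg
end

section
/- Let (X, 𝒳) and (Y, 𝒴) be measurable spaces and N a probability kernel from (X, 𝒳) to (Y, 𝒴). Then N extends uniquely to a probability kernel from (X, 𝒳^U) to (Y, 𝒴^U): for every x the probability measure N(x, ·) has a unique extension N^U(x, ·) to the universal completion 𝒴^U, and for every B ∈ 𝒴^U the map x ↦ N^U(x, B) is 𝒳^U-measurable. -/
open MeasureTheory ProbabilityTheory

/-- The universal completion `F^U = ∩_P F^P` of a σ-field. -/
def univCompletion {Ω : Type*} (m : MeasurableSpace Ω) : MeasurableSpace Ω :=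
  letI : MeasurableSpace Ω := m
  { MeasurableSet' := fun s =>
      ∀ μ : Measure Ω, IsProbabilityMeasure μ → NullMeasurableSet s μ
    measurableSet_empty := fun _ _ => MeasurableSet.empty.nullMeasurableSet
    measurableSet_compl := fun _ hs μ hμ => (hs μ hμ).compl
    measurableSet_iUnion := fun _ hf μ hμ =>
      NullMeasurableSet.iUnion fun i => hf i μ hμ }

/-!
Every set `B ∈ 𝒴^U` is, for each `x`, `N x`-a.e. equal to some `B' ∈ 𝒴`. So `N x` extends to `𝒴^U`
by keeping its outer measure, and any other extension `ν` agrees with it: `B ∆ B'` lies in a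
`𝒴`-measurable `N x`-null set, on which `ν` vanishes, so `ν B = ν B' = N x B'`.
For measurability, fix a probability `P` on `X` and pick `B' ∈ 𝒴` with `B = B'` a.e. for the
mixture `N ∘ₘ P`; then `N x B = N x B'` for `P`-a.e. `x`, so `x ↦ N x B` is `P`-a.e. equal to an
`𝒳`-measurable function, hence `𝒳^P`-measurable.
-/

open scoped symmDiff ENNReal

section UnivCompletion

variable {Ω : Type*} {m : MeasurableSpace Ω}

theorem le_univCompletion : m ≤ univCompletion m :=
  fun _ hs _ _ => hs.nullMeasurableSet

theorem measurable_univCompletion_of_aemeasurable {β : Type*} [MeasurableSpace β] {f : Ω → β}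
    (hf : ∀ μ : Measure[m] Ω, IsProbabilityMeasure μ → AEMeasurable f μ) :
    Measurable[univCompletion m] f :=
  fun _ hA μ hμ => (hf μ hμ).nullMeasurableSet_preimage hA

end UnivCompletion

namespace MeasureTheory

variable {Ω : Type*} {m : MeasurableSpace Ω}

theorem apply_eq_of_forall_measurableSet_apply_eq {F : Type*} [FunLike F (Set Ω) ℝ≥0∞]
    [OuterMeasureClass F Ω] (μ : Measure Ω) (ν : F) (h : ∀ s, MeasurableSet s → ν s = μ s)
    {B : Set Ω} (hB : NullMeasurableSet B μ) : ν B = μ B := by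
  obtain ⟨B', hB', hBB'⟩ := hB
  have hμ : μ (toMeasurable μ (B ∆ B')) = 0 := by
    rw [measure_toMeasurable, measure_symmDiff_eq_zero_iff]
    exact hBB'
  have hν : ν (B ∆ B') = 0 := by
    refine le_antisymm ?_ zero_le
    calc ν (B ∆ B') ≤ ν (toMeasurable μ (B ∆ B')) := measure_mono (subset_toMeasurable _ _)
      _ = 0 := by rw [h _ (measurableSet_toMeasurable _ _), hμ]
  calc ν B = ν B' := measure_congr (measure_symmDiff_eq_zero_iff.mp hν)
    _ = μ B' := h _ hB'
    _ = μ B := measure_congr hBB'.symm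

noncomputable def Measure.toUnivCompletion (μ : Measure Ω) [IsProbabilityMeasure μ] :
    Measure[univCompletion m] Ω :=
  @Measure.mk Ω (univCompletion m) μ.toOuterMeasure
    (fun _ hs hd =>
      measure_iUnion₀ (hd.mono fun _ _ h => h.aedisjoint) fun i => hs i μ inferInstance)
    ((OuterMeasure.trim_anti_measurableSpace _ le_univCompletion).trans_eq μ.trimmed)

theorem Measure.toUnivCompletion_apply (μ : Measure Ω) [IsProbabilityMeasure μ] (s : Set Ω) :
    μ.toUnivCompletion s = μ s :=
  rfl

theorem Measure.eq_toUnivCompletion (μ : Measure Ω) [IsProbabilityMeasure μ]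
    {ν : Measure[univCompletion m] Ω} (h : ∀ s, MeasurableSet s → ν s = μ s) :
    ν = μ.toUnivCompletion :=
  @Measure.ext Ω (univCompletion m) _ _ fun _ hB =>
    apply_eq_of_forall_measurableSet_apply_eq μ ν h (hB μ inferInstance)

end MeasureTheory

namespace ProbabilityTheory.Kernel

variable {X Y : Type*} [mX : MeasurableSpace X] [mY : MeasurableSpace Y]

theorem ae_apply_eq_of_ae_eq_comp (N : Kernel X Y) (P : Measure X) {B B' : Set Y}
    (h : B =ᵐ[N ∘ₘ P] B') : ∀ᵐ x ∂P, N x B = N x B' :=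
  (Measure.ae_ae_of_ae_comp h).mono fun _ hx => measure_congr hx

theorem aemeasurable_apply_of_nullMeasurableSet (N : Kernel X Y) (P : Measure X) {B : Set Y}
    (hB : NullMeasurableSet B (N ∘ₘ P)) : AEMeasurable (fun x => N x B) P := by
  obtain ⟨B', hB', hBB'⟩ := hB
  exact ⟨fun x => N x B', N.measurable_coe hB', N.ae_apply_eq_of_ae_eq_comp P hBB'⟩

theorem measurable_coe_univCompletion (N : Kernel X Y) [IsMarkovKernel N] {B : Set Y}
    (hB : MeasurableSet[univCompletion mY] B) : Measurable[univCompletion mX] fun x => N x B :=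
  measurable_univCompletion_of_aemeasurable fun P _ =>
    N.aemeasurable_apply_of_nullMeasurableSet P (hB _ inferInstance)

noncomputable def toUnivCompletion (N : Kernel X Y) [IsMarkovKernel N] :
    @Kernel X Y (univCompletion mX) (univCompletion mY) :=
  @Kernel.mk X Y (univCompletion mX) (univCompletion mY)
    (fun x => (N x).toUnivCompletion)
    (Measure.measurable_of_measurable_coe _ fun _ hB => N.measurable_coe_univCompletion hB)

theorem toUnivCompletion_apply (N : Kernel X Y) [IsMarkovKernel N] (x : X) (s : Set Y) :
    N.toUnivCompletion x s = N x s :=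
  (N x).toUnivCompletion_apply s

theorem eq_toUnivCompletion (N : Kernel X Y) [IsMarkovKernel N]
    {K : @Kernel X Y (univCompletion mX) (univCompletion mY)}
    (hK : ∀ x s, MeasurableSet[mY] s → K x s = N x s) : K = N.toUnivCompletion :=
  Kernel.ext fun x => (N x).eq_toUnivCompletion (hK x)

end ProbabilityTheory.Kernel

/-- **Unique extension of a probability kernel to the universal completions.** A probability
kernel `N` from `(X, 𝒳)` to `(Y, 𝒴)` extends uniquely to a kernel from `(X, 𝒳^U)` to
`(Y, 𝒴^U)`: there is a unique kernel between the universal completions agreeing with `N`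
on the sets of `𝒴`. -/
theorem kernel_unique_extension_univCompletion
    {X Y : Type*} [mX : MeasurableSpace X] [mY : MeasurableSpace Y]
    (N : Kernel X Y) [IsMarkovKernel N] :
    ∃! N' : @Kernel X Y (univCompletion mX) (univCompletion mY),
      ∀ x : X, ∀ s : Set Y, MeasurableSet[mY] s → N' x s = N x s :=
  ⟨N.toUnivCompletion, fun x s _ => N.toUnivCompletion_apply x s,
    fun _ hK => N.eq_toUnivCompletion hK⟩
end

section
/- Let (Ω, F, (F_t)_{t≥0}) be a filtered measurable space, E a metric space, and X an (F_t)-adapted process with values in E all of whose paths are càdlàg (right continuous with left limits). Let A ⊆ E be a closed set. Then the random time Z_A(ω) := inf{ t ≥ 0 : X_t(ω) ∈ A or X_{t−}(ω) ∈ A } (with X_{0−} := X_0 and inf ∅ = ∞) is an (F_t)-stopping time: { Z_A ≤ t } ∈ F_t for every t ≥ 0. -/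
/-!
For a fixed `ω`, the set of times `s` with `X_s ∈ A` or `X_{s-} ∈ A` is closed: near `s` a
càdlàg path and its left limits only accumulate at `X_s` and `X_{s-}`. Hence `Z_A ≤ t` iff this
set meets `[0, t]`. By compactness of `[0, t]`, that happens iff `X_q` comes arbitrarily close
to `A` along a countable dense set of times `q ≤ t` containing `t`, and this last condition is
an event of `ℱ_t`.
-/

open MeasureTheory Filter Set Metric
open scoped ENNReal NNReal Topology

section SupNhds

variable {α β : Type*} [TopologicalSpace β] {l : Filter α} [l.NeBot] {u : α → β} {a b : β}

theorem IsClosed.mem_or_mem_of_tendsto_sup {s : Set β} (hs : IsClosed s)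
    (h : Tendsto u l (𝓝 a ⊔ 𝓝 b)) (hu : ∀ᶠ x in l, u x ∈ s) : a ∈ s ∨ b ∈ s := by
  by_contra! hab
  have hcompl : ∀ᶠ x in l, u x ∈ sᶜ :=
    h (mem_sup.2 ⟨hs.isOpen_compl.mem_nhds hab.1, hs.isOpen_compl.mem_nhds hab.2⟩)
  obtain ⟨x, hx, hxc⟩ := (hu.and hcompl).exists
  exact hxc hx

theorem eq_or_eq_of_tendsto_sup [T2Space β] {c : β} (h : Tendsto u l (𝓝 a ⊔ 𝓝 b))
    (hc : Tendsto u l (𝓝 c)) : c = a ∨ c = b := by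
  by_contra! hne
  have hbot : (𝓝 a ⊔ 𝓝 b) ⊓ 𝓝 c = ⊥ := by
    rw [inf_sup_right, (disjoint_nhds_nhds.2 hne.1.symm).eq_bot,
      (disjoint_nhds_nhds.2 hne.2.symm).eq_bot, sup_bot_eq]
  exact (tendsto_inf.2 ⟨h, hc⟩).neBot.ne hbot

end SupNhds

section CadlagPath

variable {T E : Type*} [LinearOrder T] [TopologicalSpace T] [TopologicalSpace E] {f g : T → E}

theorem tendsto_nhds_sup_of_leftLim {s : T} (hf : ContinuousWithinAt f (Ici s) s)
    (hg : Tendsto f (𝓝[<] s) (𝓝 (g s))) : Tendsto f (𝓝 s) (𝓝 (f s) ⊔ 𝓝 (g s)) := by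
  rw [← nhdsLT_sup_nhdsGE, sup_comm (𝓝 (f s))]
  exact hg.sup_sup hf

variable [OrderTopology T] [DenselyOrdered T]

theorem leftLim_mem_of_mapsTo_Ioo {a u : T} (hau : a < u)
    (hg : Tendsto f (𝓝[<] u) (𝓝 (g u))) {V : Set E} (hV : IsClosed V)
    (hf : MapsTo f (Ioo a u) V) : g u ∈ V :=
  haveI := nhdsLT_neBot_of_exists_lt ⟨a, hau⟩
  hV.mem_of_tendsto hg (mem_of_superset (Ioo_mem_nhdsLT hau) hf)

variable [RegularSpace E]

theorem tendsto_nhdsGT_leftLim [NoMaxOrder T] (hg : ∀ u, Tendsto f (𝓝[<] u) (𝓝 (g u))) {s : T}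
    (hf : ContinuousWithinAt f (Ici s) s) : Tendsto g (𝓝[>] s) (𝓝 (f s)) :=
  (closed_nhds_basis (f s)).tendsto_right_iff.2 fun V ⟨hV, hVc⟩ => by
    obtain ⟨b, hsb, hb⟩ := mem_nhdsGE_iff_exists_Ico_subset.1 (hf hV)
    filter_upwards [Ioo_mem_nhdsGT hsb] with u hu
    exact leftLim_mem_of_mapsTo_Ioo hu.1 (hg u) hVc fun v hv => hb ⟨hv.1.le, hv.2.trans hu.2⟩

theorem tendsto_nhdsLT_leftLim (hg : ∀ u, Tendsto f (𝓝[<] u) (𝓝 (g u))) (s : T) :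
    Tendsto g (𝓝[<] s) (𝓝 (g s)) := by
  rcases (Iio s).eq_empty_or_nonempty with hs | ⟨a, has⟩
  · simp [hs]
  refine (closed_nhds_basis (g s)).tendsto_right_iff.2 fun V ⟨hV, hVc⟩ => ?_
  obtain ⟨b, hbs, hb⟩ := (mem_nhdsLT_iff_exists_Ioo_subset' has).1 (hg s hV)
  filter_upwards [Ioo_mem_nhdsLT hbs] with u hu
  exact leftLim_mem_of_mapsTo_Ioo hu.1 (hg u) hVc fun v hv => hb ⟨hv.1, hv.2.trans hu.2⟩

theorem tendsto_nhds_sup_leftLim [NoMaxOrder T] (hg : ∀ u, Tendsto f (𝓝[<] u) (𝓝 (g u)))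
    {s : T} (hf : ContinuousWithinAt f (Ici s) s) : Tendsto g (𝓝 s) (𝓝 (f s) ⊔ 𝓝 (g s)) := by
  rw [← nhdsLE_sup_nhdsGT, sup_comm (𝓝 (f s))]
  exact (continuousWithinAt_Iio_iff_Iic.1 (tendsto_nhdsLT_leftLim hg s)).sup_sup
    (tendsto_nhdsGT_leftLim hg hf)

theorem isClosed_setOf_mem_or_leftLim_mem [NoMaxOrder T]
    (hf : ∀ s, ContinuousWithinAt f (Ici s) s) (hg : ∀ u, Tendsto f (𝓝[<] u) (𝓝 (g u)))
    {A : Set E} (hA : IsClosed A) : IsClosed {s | f s ∈ A ∨ g s ∈ A} := by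
  have closure_preimage_subset : ∀ u : T → E, (∀ s, Tendsto u (𝓝 s) (𝓝 (f s) ⊔ 𝓝 (g s))) →
      closure (u ⁻¹' A) ⊆ {s | f s ∈ A ∨ g s ∈ A} := fun u hu s hs => by
    have : (𝓝[u ⁻¹' A] s).NeBot := mem_closure_iff_nhdsWithin_neBot.1 hs
    exact hA.mem_or_mem_of_tendsto_sup (l := 𝓝[u ⁻¹' A] s)
      ((hu s).mono_left nhdsWithin_le_nhds) self_mem_nhdsWithin
  change IsClosed (f ⁻¹' A ∪ g ⁻¹' A)
  rw [← closure_subset_iff_isClosed, closure_union]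
  exact union_subset
    (closure_preimage_subset f fun s => tendsto_nhds_sup_of_leftLim (hf s) (hg s))
    (closure_preimage_subset g fun s => tendsto_nhds_sup_leftLim hg (hf s))

end CadlagPath

section CountableApproximation

variable {T E : Type*} [LinearOrder T] [TopologicalSpace T]
  [PseudoEMetricSpace E] {f g : T → E} {A : Set E}

theorem exists_mem_or_leftLim_mem_of_biInf_infEDist_eq_zero [OrderBot T] [CompactIccSpace T]
    (hf : ∀ s, ContinuousWithinAt f (Ici s) s) (hg : ∀ u, Tendsto f (𝓝[<] u) (𝓝 (g u)))
    (hA : IsClosed A) {S : Set T} {t : T} (hS : S ⊆ Iic t)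
    (h : ⨅ q ∈ S, infEDist (f q) A = 0) : ∃ s ≤ t, f s ∈ A ∨ g s ∈ A := by
  rcases S.eq_empty_or_nonempty with rfl | hSne
  · simp at h
  obtain ⟨v, -, hv, hvS⟩ :=
    exists_seq_tendsto_sInf (hSne.image fun q => infEDist (f q) A) (OrderBot.bddBelow _)
  choose q hqS hqv using hvS
  rw [sInf_image, h, ← funext hqv] at hv
  have hzero : Tendsto (fun q => infEDist (f q) A) (map q atTop) (𝓝 0) := tendsto_map'_iff.2 hv
  obtain ⟨s, hs, hcluster⟩ := isCompact_Icc (a := ⊥) (b := t) (f := map q atTop)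
    (le_principal_iff.2 <| mem_map.2 <| univ_mem' fun n => ⟨bot_le, hS (hqS n)⟩)
  have : (𝓝 s ⊓ map q atTop).NeBot := hcluster
  have hsup : Tendsto (fun q => infEDist (f q) A) (𝓝 s ⊓ map q atTop)
      (𝓝 (infEDist (f s) A) ⊔ 𝓝 (infEDist (g s) A)) :=
    ((continuous_infEDist.tendsto _).sup_sup (continuous_infEDist.tendsto _)).comp
      ((tendsto_nhds_sup_of_leftLim (hf s) (hg s)).mono_left inf_le_left)
  refine ⟨s, hs.2, ?_⟩
  have mem_of_infEDist : ∀ x, 0 = infEDist x A → x ∈ A := fun x hx =>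
    hA.closure_subset (mem_closure_iff_infEDist_zero.2 hx.symm)
  exact (eq_or_eq_of_tendsto_sup hsup (hzero.mono_left inf_le_right)).imp
    (mem_of_infEDist _) (mem_of_infEDist _)

variable [OrderTopology T] [DenselyOrdered T]

theorem Dense.Icc_subset_closure_Ioo_inter {D : Set T} (hD : Dense D) {a b : T} (hab : a < b) :
    Icc a b ⊆ closure (Ioo a b ∩ D) := by
  rw [← closure_Ioo hab.ne]
  exact closure_minimal (hD.open_subset_closure_inter isOpen_Ioo) isClosed_closure

theorem biInf_infEDist_eq_zero_of_exists_mem_or_leftLim_mem [OrderBot T] {D : Set T}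
    (hD : Dense D) (hf : ∀ s, ContinuousWithinAt f (Ici s) s)
    (hg : ∀ u, Tendsto f (𝓝[<] u) (𝓝 (g u))) (hg_bot : g ⊥ = f ⊥) {t : T}
    (h : ∃ s ≤ t, f s ∈ A ∨ g s ∈ A) : ⨅ q ∈ insert t (D ∩ Iio t), infEDist (f q) A = 0 := by
  have of_tendsto : ∀ {S : Set T} {s : T}, S ⊆ D ∩ Iio t → s ∈ closure S →
      Tendsto (fun q => infEDist (f q) A) (𝓝[S] s) (𝓝 0) →
      ⨅ q ∈ insert t (D ∩ Iio t), infEDist (f q) A = 0 := by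
    intro S s hS hs hlim
    have : (𝓝[S] s).NeBot := mem_closure_iff_nhdsWithin_neBot.1 hs
    exact nonpos_iff_eq_zero.1 <| ge_of_tendsto hlim <| eventually_nhdsWithin_of_forall
      fun q hq => biInf_le (fun q => infEDist (f q) A) (mem_insert_of_mem _ (hS hq))
  have of_mem : ∀ s ≤ t, f s ∈ A → ⨅ q ∈ insert t (D ∩ Iio t), infEDist (f q) A = 0 := by
    intro s hst hs
    rcases hst.eq_or_lt with rfl | hst
    · refine nonpos_iff_eq_zero.1 ((biInf_le (fun q => infEDist (f q) A) (mem_insert s _)).trans ?_)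
      exact (infEDist_zero_of_mem hs).le
    refine of_tendsto (S := Ioo s t ∩ D) (fun q hq => ⟨hq.2, hq.1.2⟩)
      (hD.Icc_subset_closure_Ioo_inter hst (left_mem_Icc.2 hst.le)) ?_
    rw [← infEDist_zero_of_mem hs]
    exact (continuous_infEDist.tendsto _).comp
      ((hf s).mono_left (nhdsWithin_mono _ fun q hq => hq.1.1.le))
  obtain ⟨s, hst, hs | hs⟩ := h
  · exact of_mem s hst hs
  rcases eq_bot_or_bot_lt s with rfl | hs0
  · exact of_mem ⊥ hst (hg_bot ▸ hs)
  refine of_tendsto (S := Ioo ⊥ s ∩ D) (fun q hq => ⟨hq.2, hq.1.2.trans_le hst⟩)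
    (hD.Icc_subset_closure_Ioo_inter hs0 (right_mem_Icc.2 hs0.le)) ?_
  rw [← infEDist_zero_of_mem hs]
  exact (continuous_infEDist.tendsto _).comp
    ((hg s).mono_left (nhdsWithin_mono _ fun q hq => hq.1.2))

end CountableApproximation

theorem IsClosed.biInf_coe_le_coe_iff {H : Set ℝ≥0} (hH : IsClosed H) {t : ℝ≥0} :
    (⨅ s ∈ H, (s : ℝ≥0∞)) ≤ t ↔ ∃ s ≤ t, s ∈ H := by
  refine ⟨fun h => ?_, fun ⟨s, hst, hs⟩ => (biInf_le _ hs).trans (ENNReal.coe_le_coe.2 hst)⟩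
  rcases H.eq_empty_or_nonempty with rfl | hne
  · simp at h
  rw [← ENNReal.coe_sInf hne, ENNReal.coe_le_coe] at h
  exact ⟨sInf H, h, hH.csInf_mem hne (OrderBot.bddBelow H)⟩

theorem hitting_time_closed_is_stopping_time_general
    {Ω E : Type*}
    [MetricSpace E] [MeasurableSpace E] [BorelSpace E]
    (ℱ : ℝ≥0 → MeasurableSpace Ω) (hmono : Monotone ℱ)
    (X Xm : ℝ≥0 → Ω → E)
    (hadapted : ∀ t : ℝ≥0, Measurable[ℱ t] (X t))
    (hright : ∀ ω : Ω, ∀ t : ℝ≥0, ContinuousWithinAt (fun s => X s ω) (Set.Ici t) t)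
    (hXm0 : ∀ ω : Ω, Xm 0 ω = X 0 ω)
    (hleft : ∀ ω : Ω, ∀ t : ℝ≥0, 0 < t →
      Tendsto (fun s => X s ω) (𝓝[Set.Iio t] t) (𝓝 (Xm t ω)))
    (A : Set E) (hA : IsClosed A) :
    ∀ t : ℝ≥0,
      MeasurableSet[ℱ t]
        {ω | (⨅ (s : ℝ≥0) (_ : X s ω ∈ A ∨ Xm s ω ∈ A), (s : ℝ≥0∞)) ≤ (t : ℝ≥0∞)} := by
  intro t
  obtain ⟨D, hD_countable, hD_dense⟩ := TopologicalSpace.exists_countable_dense ℝ≥0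
  have hleft' : ∀ ω s, Tendsto (fun s => X s ω) (𝓝[<] s) (𝓝 (Xm s ω)) := fun ω s => by
    rcases eq_zero_or_pos s with rfl | hs
    · simp -- `𝓝[<] 0 = ⊥` in `ℝ≥0`
    · exact hleft ω s hs
  have hDt : insert t (D ∩ Iio t) ⊆ Iic t :=
    insert_subset_iff.2 ⟨self_mem_Iic, fun q hq => mem_Iic.2 hq.2.le⟩
  have hset : {ω | (⨅ (s : ℝ≥0) (_ : X s ω ∈ A ∨ Xm s ω ∈ A), (s : ℝ≥0∞)) ≤ (t : ℝ≥0∞)} =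
      {ω | ⨅ q ∈ insert t (D ∩ Iio t), infEDist (X q ω) A = 0} := by
    ext ω
    refine (isClosed_setOf_mem_or_leftLim_mem (hright ω) (hleft' ω) hA).biInf_coe_le_coe_iff.trans
      ⟨?_, exists_mem_or_leftLim_mem_of_biInf_infEDist_eq_zero (hright ω) (hleft' ω) hA hDt⟩
    exact biInf_infEDist_eq_zero_of_exists_mem_or_leftLim_mem hD_dense (hright ω) (hleft' ω)
      (hXm0 ω)
  have hmeas : Measurable[ℱ t] fun ω => ⨅ q ∈ insert t (D ∩ Iio t), infEDist (X q ω) A :=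
    Measurable.biInf _ ((hD_countable.mono inter_subset_left).insert t) fun q hq =>
      continuous_infEDist.measurable.comp ((hadapted q).mono (hmono (hDt hq)) le_rfl)
  rw [hset]
  exact hmeas (measurableSet_singleton 0)

/-- **The hitting time of a closed set by a càdlàg adapted process (together with its left
limits) is a stopping time.** `X` is adapted to the filtration `ℱ`, all its paths are
right continuous, `Xm` is the process of left limits (`Xm 0 = X 0`), and `A` is closed.
Then `Z_A(ω) := inf { t ≥ 0 : X_t(ω) ∈ A or X_{t−}(ω) ∈ A }` (convention `inf ∅ = ∞`)
satisfies `{Z_A ≤ t} ∈ ℱ_t` for every `t`. -/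
theorem hitting_time_closed_is_stopping_time
    {Ω E : Type*} [mΩ : MeasurableSpace Ω]
    [MetricSpace E] [MeasurableSpace E] [BorelSpace E]
    (ℱ : ℝ≥0 → MeasurableSpace Ω) (hmono : Monotone ℱ) (hle : ∀ t, ℱ t ≤ mΩ)
    (X Xm : ℝ≥0 → Ω → E)
    (hadapted : ∀ t : ℝ≥0, Measurable[ℱ t] (X t))
    (hright : ∀ ω : Ω, ∀ t : ℝ≥0, ContinuousWithinAt (fun s => X s ω) (Set.Ici t) t)
    (hXm0 : ∀ ω : Ω, Xm 0 ω = X 0 ω)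
    (hleft : ∀ ω : Ω, ∀ t : ℝ≥0, 0 < t →
      Tendsto (fun s => X s ω) (𝓝[Set.Iio t] t) (𝓝 (Xm t ω)))
    (A : Set E) (hA : IsClosed A) :
    ∀ t : ℝ≥0,
      MeasurableSet[ℱ t]
        {ω | (⨅ (s : ℝ≥0) (_ : X s ω ∈ A ∨ Xm s ω ∈ A), (s : ℝ≥0∞)) ≤ (t : ℝ≥0∞)} :=
  hitting_time_closed_is_stopping_time_general ℱ hmono X Xm hadapted hright hXm0 hleft A hA
end
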